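/- arXiv:1103.3005 — 7 statements merged into one kernel-verified Lean document; each statement's English description precedes it below -/
import Mathlib

section
/- Let V and W be additive commutative groups, H : V → W an additive map admitting a right inverse r : W → V (i.e. H(r(y)) = y for all y ∈ W), and f : W → V an arbitrary function. If the map T : V → V defined by T(z) = z − f(H(z)) is bijective, then the map S : W → W defined by S(y) = y − H(f(y)) is bijective, and its inverse is H ∘ T⁻¹ ∘ r; that is, S(H(T⁻¹(r(y₀)))) = y₀ and H(T⁻¹(r(S(y)))) = y for all y₀, y ∈ W. -/
/-!
Writing `S = 1 - H ∘ f` and `T = 1 - f ∘ H`, additivity of `H` gives the intertwining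
`S ∘ H = H ∘ T`, which makes `H ∘ T⁻¹ ∘ r` a right inverse of `S`. It is also a left inverse:
for `y : W` the point `z = r (S y) + f y` satisfies `H z = y` and hence `T z = r (S y)`.
-/

section

variable {V W : Type*} [AddCommGroup V] [AddCommGroup W] (H : V →+ W) (f : W → V)
  {r : W → V} {Tinv : V → V}

theorem rightInverse_sub_map_comp_of_rightInverse (hr : Function.RightInverse r H)
    (hT : Function.RightInverse Tinv fun z => z - f (H z)) :
    Function.RightInverse (H ∘ Tinv ∘ r) fun y => y - H (f y) := fun y =>
  calc H (Tinv (r y)) - H (f (H (Tinv (r y))))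
      = H (Tinv (r y) - f (H (Tinv (r y)))) := (map_sub H _ _).symm
    _ = H (r y) := congrArg H (hT (r y))
    _ = y := hr y

theorem leftInverse_sub_map_comp_of_leftInverse (hr : Function.RightInverse r H)
    (hT : Function.LeftInverse Tinv fun z => z - f (H z)) :
    Function.LeftInverse (H ∘ Tinv ∘ r) fun y => y - H (f y) := fun y => by
  set z := r (y - H (f y)) + f y
  have hHz : H z = y := by rw [map_add, hr, sub_add_cancel]
  have hTz : z - f (H z) = r (y - H (f y)) := by rw [hHz, add_sub_cancel_right]
  change H (Tinv (r (y - H (f y)))) = y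
  rw [← hTz, hT z, hHz]

end

theorem stmt_0_general {V W : Type*} [AddCommGroup V] [AddCommGroup W]
    (H : V → W) (hH : ∀ a b : V, H (a + b) = H a + H b)
    (r : W → V) (hr : ∀ y : W, H (r y) = y)
    (f : W → V)
    (T : V → V) (hT : ∀ z : V, T z = z - f (H z))
    (Tinv : V → V)
    (hTinv₁ : Function.LeftInverse Tinv T)
    (hTinv₂ : Function.RightInverse Tinv T)
    (S : W → W) (hS : ∀ y : W, S y = y - H (f y)) :
    Function.Bijective S ∧
      (∀ y₀ : W, S (H (Tinv (r y₀))) = y₀) ∧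
      (∀ y : W, H (Tinv (r (S y))) = y) := by
  let H' : V →+ W := AddMonoidHom.mk' H hH
  obtain rfl : T = fun z => z - f (H' z) := funext hT
  obtain rfl : S = fun y => y - H' (f y) := funext hS
  have hleft := leftInverse_sub_map_comp_of_leftInverse H' f hr hTinv₁
  have hright := rightInverse_sub_map_comp_of_rightInverse H' f hr hTinv₂
  exact ⟨⟨hleft.injective, hright.surjective⟩, hright, hleft⟩

/-- If `T : V → V`, `T z = z - f (H z)`, is bijective (witnessed by a
two-sided inverse `Tinv`), `H` is additive with right inverse `r`, then
`S : W → W`, `S y = y - H (f y)`, is bijective with inverse `H ∘ Tinv ∘ r`. -/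
theorem stmt_0 {V W : Type*} [AddCommGroup V] [AddCommGroup W]
    (H : V → W) (hH : ∀ a b : V, H (a + b) = H a + H b)
    (r : W → V) (hr : ∀ y : W, H (r y) = y)
    (f : W → V)
    (T : V → V) (hT : ∀ z : V, T z = z - f (H z))
    (hTbij : Function.Bijective T)
    (Tinv : V → V)
    (hTinv₁ : Function.LeftInverse Tinv T)
    (hTinv₂ : Function.RightInverse Tinv T)
    (S : W → W) (hS : ∀ y : W, S y = y - H (f y)) :
    Function.Bijective S ∧
      (∀ y₀ : W, S (H (Tinv (r y₀))) = y₀) ∧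
      (∀ y : W, H (Tinv (r (S y))) = y) :=
  stmt_0_general H hH r hr f T hT Tinv hTinv₁ hTinv₂ S hS
end

section
/- Let V and W be additive commutative groups, H : V → W an additive map admitting a right inverse r : W → V (H(r(y)) = y for all y), and f : W → V an arbitrary function. Assume T : V → V, T(z) = z − f(H(z)), is bijective, so that (by the invertibility-transfer result) S : W → W, S(y) = y − H(f(y)), is bijective. Then H ∘ T⁻¹ = S⁻¹ ∘ H, i.e. H(T⁻¹(z₀)) = S⁻¹(H(z₀)) for every z₀ ∈ V. -/
/-! `H` intertwines `T = 1 - f ∘ H` with `S = 1 - H ∘ f` by additivity alone, and a map that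
semiconjugates two bijections also semiconjugates their inverses. -/

theorem AddMonoidHom.semiconj_sub_comp {V W : Type*} [AddCommGroup V] [AddCommGroup W]
    (H : V →+ W) (f : W → V) :
    Function.Semiconj H (fun z => z - f (H z)) (fun y => y - H (f y)) :=
  fun z => map_sub H z (f (H z))

theorem stmt_1_general {V W : Type*} [AddCommGroup V] [AddCommGroup W]
    (H : V → W) (hH : ∀ a b : V, H (a + b) = H a + H b)
    (f : W → V)
    (T : V → V) (hT : ∀ z : V, T z = z - f (H z))
    (Tinv : V → V)
    (hTinv₂ : Function.RightInverse Tinv T)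
    (S : W → W) (hS : ∀ y : W, S y = y - H (f y))
    (Sinv : W → W)
    (hSinv₁ : Function.LeftInverse Sinv S) :
    ∀ z₀ : V, H (Tinv z₀) = Sinv (H z₀) := by
  obtain rfl : T = fun z => z - f (H z) := funext hT
  obtain rfl : S = fun y => y - H (f y) := funext hS
  exact ((AddMonoidHom.mk' H hH).semiconj_sub_comp f).inverses_right hTinv₂ hSinv₁

/-- Under the same hypotheses as the invertibility-transfer result
(`T z = z - f (H z)` bijective, `H` additive with right inverse `r`, and hence
`S y = y - H (f y)` bijective), the commutation identity `H ∘ T⁻¹ = S⁻¹ ∘ H` holds. -/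
theorem stmt_1 {V W : Type*} [AddCommGroup V] [AddCommGroup W]
    (H : V → W) (hH : ∀ a b : V, H (a + b) = H a + H b)
    (r : W → V) (hr : ∀ y : W, H (r y) = y)
    (f : W → V)
    (T : V → V) (hT : ∀ z : V, T z = z - f (H z))
    (hTbij : Function.Bijective T)
    (Tinv : V → V)
    (hTinv₁ : Function.LeftInverse Tinv T)
    (hTinv₂ : Function.RightInverse Tinv T)
    (S : W → W) (hS : ∀ y : W, S y = y - H (f y))
    (hSbij : Function.Bijective S)
    (Sinv : W → W)
    (hSinv₁ : Function.LeftInverse Sinv S)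
    (hSinv₂ : Function.RightInverse Sinv S) :
    ∀ z₀ : V, H (Tinv z₀) = Sinv (H z₀) :=
  stmt_1_general H hH f T hT Tinv hTinv₂ S hS Sinv hSinv₁
end

section
/- Fix T₀ > 0 and let E and E' be additive commutative groups. On the path spaces P_E := ([0,T₀] → E) and P_{E'} := ([0,T₀] → E') with pointwise addition, define for τ ∈ [0,T₀] the truncation operator Π_τ by (Π_τ x)(t) = x(min(t,τ)); a map f between path spaces is called causal if Π_τ ∘ f ∘ Π_τ = Π_τ ∘ f for every τ ∈ [0,T₀]. Suppose H : P_E → P_{E'} is additive and causal and admits a causal right inverse r : P_{E'} → P_E (H ∘ r = id), suppose f : P_{E'} → P_E is causal, and suppose the map T : P_E → P_E, T(z) = z − f(H(z)), is bijective with causal inverse T⁻¹. Then the map S : P_{E'} → P_{E'}, S(y) = y − H(f(y)), is bijective and its inverse S⁻¹ = H ∘ T⁻¹ ∘ r is causal. -/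
/-- Truncation operator on the path space `[0,T₀] → E`: `(Π_τ x)(t) = x (min t τ)`. -/
def trunc {E : Type*} (T₀ : ℝ) (τ : Set.Icc (0:ℝ) T₀) :
    (Set.Icc (0:ℝ) T₀ → E) → (Set.Icc (0:ℝ) T₀ → E) :=
  fun x t => x (min t τ)

/-- A map between path spaces is causal (nonanticipatory) if
`Π_τ ∘ f ∘ Π_τ = Π_τ ∘ f` for every `τ ∈ [0,T₀]`. -/
def Causal {E E' : Type*} (T₀ : ℝ)
    (f : (Set.Icc (0:ℝ) T₀ → E) → (Set.Icc (0:ℝ) T₀ → E')) : Prop :=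
  ∀ τ : Set.Icc (0:ℝ) T₀,
    (trunc T₀ τ) ∘ f ∘ (trunc T₀ τ) = (trunc T₀ τ) ∘ f

/-!
Since `H` is additive, `H (z - f (H z)) = H z - H (f (H z))`, i.e. `H ∘ T = S ∘ H`; with
`H ∘ r = id` this makes `H ∘ T⁻¹ ∘ r` a right inverse of `S`. Injectivity of `S` is pulled back
from that of `T`: if `S y₁ = S y₂`, the path `z = r y₁ + f y₂ - f y₁` satisfies `H z = y₂` and
`T z = T (r y₁)`, so `f y₁ = f y₂` and then `y₁ = y₂`. Causality of `H ∘ T⁻¹ ∘ r` holds because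
causal maps compose.
-/

namespace Causal

variable {A B C : Type*} {T₀ : ℝ}

theorem trunc_apply_trunc {g : (Set.Icc (0:ℝ) T₀ → A) → (Set.Icc (0:ℝ) T₀ → B)}
    (hg : Causal T₀ g) (τ : Set.Icc (0:ℝ) T₀) (x : Set.Icc (0:ℝ) T₀ → A) :
    trunc T₀ τ (g (trunc T₀ τ x)) = trunc T₀ τ (g x) :=
  congrFun (hg τ) x

theorem comp {g : (Set.Icc (0:ℝ) T₀ → B) → (Set.Icc (0:ℝ) T₀ → C)}
    {h : (Set.Icc (0:ℝ) T₀ → A) → (Set.Icc (0:ℝ) T₀ → B)}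
    (hg : Causal T₀ g) (hh : Causal T₀ h) : Causal T₀ (g ∘ h) := by
  refine fun τ => funext fun x => ?_
  calc trunc T₀ τ (g (h (trunc T₀ τ x)))
      = trunc T₀ τ (g (trunc T₀ τ (h (trunc T₀ τ x)))) := (hg.trunc_apply_trunc τ _).symm
    _ = trunc T₀ τ (g (trunc T₀ τ (h x))) := by rw [hh.trunc_apply_trunc]
    _ = trunc T₀ τ (g (h x)) := hg.trunc_apply_trunc τ _

end Causal

section PushThrough

variable {A B : Type*} [AddCommGroup A] [AddCommGroup B]

theorem rightInverse_sub_comp (H : A →+ B) {r : B → A} (hr : Function.RightInverse r H)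
    (f : B → A) {Tinv : A → A} (hTinv : Function.RightInverse Tinv fun z => z - f (H z)) :
    Function.RightInverse (H ∘ Tinv ∘ r) fun y => y - H (f y) := by
  intro y
  have hHT : ∀ z, H (z - f (H z)) = H z - H (f (H z)) := fun z => H.map_sub _ _
  simpa only [Function.comp_apply, hTinv (r y), hr y] using (hHT (Tinv (r y))).symm

theorem injective_sub_comp (H : A →+ B) {r : B → A} (hr : Function.RightInverse r H)
    (f : B → A) (hT : Function.Injective fun z => z - f (H z)) :
    Function.Injective fun y => y - H (f y) := by
  intro y₁ y₂ hS
  simp only at hS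
  have hHz : H (r y₁ + (f y₂ - f y₁)) = y₂ := by
    rw [map_add, map_sub, hr]
    linear_combination (norm := abel) hS
  have hz : r y₁ + (f y₂ - f y₁) = r y₁ := hT <| by
    simp only [hHz, hr y₁]
    abel
  have hf : f y₁ = f y₂ := (sub_eq_zero.mp (add_eq_left.mp hz)).symm
  simpa only [hf, sub_left_inj] using hS

end PushThrough

theorem stmt_2_general {E E' : Type*} [AddCommGroup E] [AddCommGroup E']
    (T₀ : ℝ)
    (H : (Set.Icc (0:ℝ) T₀ → E) → (Set.Icc (0:ℝ) T₀ → E'))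
    (hHadd : ∀ a b, H (a + b) = H a + H b)
    (hHcausal : Causal T₀ H)
    (r : (Set.Icc (0:ℝ) T₀ → E') → (Set.Icc (0:ℝ) T₀ → E))
    (hrcausal : Causal T₀ r)
    (hr : ∀ y, H (r y) = y)
    (f : (Set.Icc (0:ℝ) T₀ → E') → (Set.Icc (0:ℝ) T₀ → E))
    (T : (Set.Icc (0:ℝ) T₀ → E) → (Set.Icc (0:ℝ) T₀ → E))
    (hT : ∀ z, T z = z - f (H z))
    (Tinv : (Set.Icc (0:ℝ) T₀ → E) → (Set.Icc (0:ℝ) T₀ → E))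
    (hTinv₁ : Function.LeftInverse Tinv T)
    (hTinv₂ : Function.RightInverse Tinv T)
    (hTinvcausal : Causal T₀ Tinv)
    (S : (Set.Icc (0:ℝ) T₀ → E') → (Set.Icc (0:ℝ) T₀ → E'))
    (hS : ∀ y, S y = y - H (f y)) :
    Function.Bijective S ∧
      Function.LeftInverse (H ∘ Tinv ∘ r) S ∧
      Function.RightInverse (H ∘ Tinv ∘ r) S ∧
      Causal T₀ (H ∘ Tinv ∘ r) := by
  obtain rfl : T = fun z => z - f (H z) := funext hT
  obtain rfl : S = fun y => y - H (f y) := funext hS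
  let Hₐ := AddMonoidHom.mk' H hHadd
  have hinj := injective_sub_comp Hₐ hr f hTinv₁.injective
  have hright := rightInverse_sub_comp Hₐ hr f hTinv₂
  exact ⟨⟨hinj, hright.surjective⟩, hright.leftInverse_of_injective hinj, hright,
    hHcausal.comp (hTinvcausal.comp hrcausal)⟩

/-- path-wise content of the key lemma. If `H` is additive and causal with a
causal right inverse `r`, `f` is causal, and `T z = z - f (H z)` is bijective with causal
inverse, then `S y = y - H (f y)` is bijective and its inverse `H ∘ T⁻¹ ∘ r` is causal. -/
theorem stmt_2 {E E' : Type*} [AddCommGroup E] [AddCommGroup E']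
    (T₀ : ℝ) (hT₀ : 0 < T₀)
    (H : (Set.Icc (0:ℝ) T₀ → E) → (Set.Icc (0:ℝ) T₀ → E'))
    (hHadd : ∀ a b, H (a + b) = H a + H b)
    (hHcausal : Causal T₀ H)
    (r : (Set.Icc (0:ℝ) T₀ → E') → (Set.Icc (0:ℝ) T₀ → E))
    (hrcausal : Causal T₀ r)
    (hr : ∀ y, H (r y) = y)
    (f : (Set.Icc (0:ℝ) T₀ → E') → (Set.Icc (0:ℝ) T₀ → E))
    (hfcausal : Causal T₀ f)
    (T : (Set.Icc (0:ℝ) T₀ → E) → (Set.Icc (0:ℝ) T₀ → E))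
    (hT : ∀ z, T z = z - f (H z))
    (hTbij : Function.Bijective T)
    (Tinv : (Set.Icc (0:ℝ) T₀ → E) → (Set.Icc (0:ℝ) T₀ → E))
    (hTinv₁ : Function.LeftInverse Tinv T)
    (hTinv₂ : Function.RightInverse Tinv T)
    (hTinvcausal : Causal T₀ Tinv)
    (S : (Set.Icc (0:ℝ) T₀ → E') → (Set.Icc (0:ℝ) T₀ → E'))
    (hS : ∀ y, S y = y - H (f y)) :
    Function.Bijective S ∧
      Function.LeftInverse (H ∘ Tinv ∘ r) S ∧
      Function.RightInverse (H ∘ Tinv ∘ r) S ∧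
      Causal T₀ (H ∘ Tinv ∘ r) :=
  stmt_2_general T₀ H hHadd hHcausal r hrcausal hr f T hT Tinv hTinv₁ hTinv₂ hTinvcausal S hS
end

section
/- Fix T₀ > 0, let Ω be a measurable space and let E, E' be measurable spaces; equip the path spaces ([0,T₀] → E) and ([0,T₀] → E') with the product (cylinder) σ-algebras. Let y₀ : Ω → ([0,T₀] → E) be measurable, and let F : ([0,T₀] → E) → ([0,T₀] → E') be measurable and causal, where causal means: for every τ ∈ [0,T₀] and all paths x, x', if x(s) = x'(s) for all s ≤ τ then (F x)(s) = (F x')(s) for all s ≤ τ. Define y := F ∘ y₀. Then for every t ∈ [0,T₀], the σ-algebra on Ω generated by the maps ω ↦ y(ω)(s), s ∈ [0,t], is contained in the σ-algebra generated by the maps ω ↦ y₀(ω)(s), s ∈ [0,t]. -/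
/-!
Stopping the input path at time `t`, `x ↦ x (min · t)`, is measurable for the σ-algebra generated by
the coordinates up to `t`; by causality, `F` applied to the stopped path agrees with `F` applied to the
original path at all times `s ≤ t`. Hence each coordinate `s ≤ t` of the output is a measurable function
of the input coordinates up to `t`.
-/

open MeasureTheory

section

variable {Ω ι E E' : Type*}

abbrev pathSigmaUpTo [MeasurableSpace E] [Preorder ι] (X : Ω → ι → E) (t : ι) : MeasurableSpace Ω :=
  ⨆ s : ι, ⨆ _ : s ≤ t, MeasurableSpace.comap (fun ω => X ω s) inferInstance

def IsCausal [Preorder ι] (F : (ι → E) → ι → E') : Prop :=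
  ∀ (τ : ι) (x x' : ι → E), (∀ s, s ≤ τ → x s = x' s) → ∀ s, s ≤ τ → F x s = F x' s

section Preorder

variable [MeasurableSpace E] [Preorder ι]

theorem pathSigmaUpTo_le_iff {X : Ω → ι → E} {t : ι} {m : MeasurableSpace Ω} :
    pathSigmaUpTo X t ≤ m ↔ ∀ s, s ≤ t → Measurable[m] (fun ω => X ω s) := by
  simp only [pathSigmaUpTo, iSup_le_iff, measurable_iff_comap_le]

theorem measurable_pathSigmaUpTo_apply (X : Ω → ι → E) {s t : ι} (hs : s ≤ t) :
    Measurable[pathSigmaUpTo X t] (fun ω => X ω s) :=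
  pathSigmaUpTo_le_iff.1 le_rfl s hs

end Preorder

section LinearOrder

variable [LinearOrder ι]

theorem measurable_pathSigmaUpTo_stopped [MeasurableSpace E] (X : Ω → ι → E) (t : ι) :
    Measurable[pathSigmaUpTo X t] (fun ω u => X ω (min u t)) :=
  letI := pathSigmaUpTo X t
  measurable_pi_lambda _ fun u => measurable_pathSigmaUpTo_apply X (min_le_right u t)

theorem IsCausal.apply_stopped {F : (ι → E) → ι → E'} (hF : IsCausal F) (x : ι → E) {s t : ι}
    (hs : s ≤ t) : F (fun u => x (min u t)) s = F x s :=
  hF t _ x (fun _ hu => by rw [min_eq_left hu]) s hs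

theorem pathSigmaUpTo_comp_le [MeasurableSpace E] [MeasurableSpace E'] {F : (ι → E) → ι → E'}
    (hFmeas : Measurable F) (hF : IsCausal F) (X : Ω → ι → E) (t : ι) : pathSigmaUpTo (F ∘ X) t ≤ pathSigmaUpTo X t := by
  refine pathSigmaUpTo_le_iff.2 fun s hs => ?_
  have hstopped : Measurable[pathSigmaUpTo X t] (fun ω => F (fun u => X ω (min u t)) s) :=
    (measurable_pi_apply s).comp (hFmeas.comp (measurable_pathSigmaUpTo_stopped X t))
  simpa only [hF.apply_stopped _ hs, Function.comp_apply] using hstopped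

end LinearOrder

end

theorem stmt_5_general {Ω E E' : Type*} [MeasurableSpace Ω] [MeasurableSpace E] [MeasurableSpace E']
    (T₀ : ℝ)
    (y₀ : Ω → Set.Icc (0:ℝ) T₀ → E)
    (F : (Set.Icc (0:ℝ) T₀ → E) → (Set.Icc (0:ℝ) T₀ → E'))
    (hFmeas : Measurable F)
    (hFcausal : ∀ (τ : Set.Icc (0:ℝ) T₀) (x x' : Set.Icc (0:ℝ) T₀ → E),
      (∀ s, s ≤ τ → x s = x' s) → ∀ s, s ≤ τ → F x s = F x' s)
    (y : Ω → Set.Icc (0:ℝ) T₀ → E') (hy : y = F ∘ y₀) :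
    ∀ t : Set.Icc (0:ℝ) T₀,
      (⨆ s : Set.Icc (0:ℝ) T₀, ⨆ _ : s ≤ t,
          MeasurableSpace.comap (fun ω => y ω s) inferInstance) ≤
        ⨆ s : Set.Icc (0:ℝ) T₀, ⨆ _ : s ≤ t,
          MeasurableSpace.comap (fun ω => y₀ ω s) inferInstance := by
  subst hy
  exact pathSigmaUpTo_comp_le hFmeas hFcausal y₀

/-- a causal measurable map applied path-wise to a process does not enlarge
the natural filtration: `σ{y(s), s ≤ t} ⊆ σ{y₀(s), s ≤ t}` where `y = F ∘ y₀`. -/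
theorem stmt_5 {Ω E E' : Type*} [MeasurableSpace Ω] [MeasurableSpace E] [MeasurableSpace E']
    (T₀ : ℝ) (hT₀ : 0 < T₀)
    (y₀ : Ω → Set.Icc (0:ℝ) T₀ → E) (hy₀ : Measurable y₀)
    (F : (Set.Icc (0:ℝ) T₀ → E) → (Set.Icc (0:ℝ) T₀ → E'))
    (hFmeas : Measurable F)
    (hFcausal : ∀ (τ : Set.Icc (0:ℝ) T₀) (x x' : Set.Icc (0:ℝ) T₀ → E),
      (∀ s, s ≤ τ → x s = x' s) → ∀ s, s ≤ τ → F x s = F x' s)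
    (y : Ω → Set.Icc (0:ℝ) T₀ → E') (hy : y = F ∘ y₀) :
    ∀ t : Set.Icc (0:ℝ) T₀,
      (⨆ s : Set.Icc (0:ℝ) T₀, ⨆ _ : s ≤ t,
          MeasurableSpace.comap (fun ω => y ω s) inferInstance) ≤
        ⨆ s : Set.Icc (0:ℝ) T₀, ⨆ _ : s ≤ t,
          MeasurableSpace.comap (fun ω => y₀ ω s) inferInstance :=
  stmt_5_general T₀ y₀ F hFmeas hFcausal y hy
end

section
/- Fix T₀ > 0, let Ω be a measurable space and let E, E' be measurable spaces; equip the path spaces ([0,T₀] → E) and ([0,T₀] → E') with the product (cylinder) σ-algebras. Let y₀ : Ω → ([0,T₀] → E) be measurable and let F : ([0,T₀] → E) → ([0,T₀] → E') be a bijection such that both F and F⁻¹ are measurable and causal, where a map between path spaces is causal if for every τ ∈ [0,T₀] and all paths x, x', the equality x(s) = x'(s) for all s ≤ τ implies equality of the images at all s ≤ τ. Define y := F ∘ y₀. Then for every t ∈ [0,T₀], the σ-algebra on Ω generated by the maps ω ↦ y(ω)(s), s ∈ [0,t], equals the σ-algebra generated by the maps ω ↦ y₀(ω)(s), s ∈ [0,t].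 -/
/-!
Observing `y` up to time `t` is the same as observing the path of `y₀` stopped at `t`: by
causality, `F y₀` and `F` of the stopped path agree up to `t`, and the stopped path is measurable
for the past σ-algebra of `y₀`, so the past of `y = F ∘ y₀` is contained in the past of `y₀`. The
same argument for `F⁻¹`, applied to `y₀ = F⁻¹ ∘ y`, gives the reverse inclusion.
-/

namespace PathSpace

open MeasureTheory

variable {ι Ω E E' : Type*} [LinearOrder ι] [MeasurableSpace E] [MeasurableSpace E']

def IsCausal (F : (ι → E) → ι → E') : Prop :=
  ∀ τ x x', (∀ s ≤ τ, x s = x' s) → ∀ s ≤ τ, F x s = F x' s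

abbrev pastSigma (w : Ω → ι → E) (t : ι) : MeasurableSpace Ω :=
  ⨆ s, ⨆ _ : s ≤ t, MeasurableSpace.comap (fun ω => w ω s) inferInstance

lemma measurable_stopped (w : Ω → ι → E) (t : ι) :
    Measurable[pastSigma w t] fun ω u => w ω (min u t) :=
  @measurable_pi_lambda _ _ _ (pastSigma w t) _ _ fun u => measurable_iff_comap_le.2 <|
    le_iSup₂_of_le (f := fun s (_ : s ≤ t) => MeasurableSpace.comap (fun ω => w ω s) _)
      (min u t) (min_le_right u t) le_rfl

lemma IsCausal.pastSigma_comp_le {F : (ι → E) → ι → E'} (hF : IsCausal F)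
    (hFmeas : Measurable F) (w : Ω → ι → E) (t : ι) :
    pastSigma (F ∘ w) t ≤ pastSigma w t := by
  refine iSup₂_le fun s hs => ?_
  have h_stop : (fun ω => (F ∘ w) ω s) = fun ω => F (fun u => w ω (min u t)) s := funext fun ω =>
    hF t _ _ (fun u hu => by rw [min_eq_left hu]) s hs
  rw [h_stop, ← measurable_iff_comap_le]
  exact (measurable_pi_apply s).comp (hFmeas.comp (measurable_stopped w t))

end PathSpace

theorem stmt_6_general {Ω E E' : Type*} [MeasurableSpace Ω] [MeasurableSpace E] [MeasurableSpace E']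
    (T₀ : ℝ)
    (y₀ : Ω → Set.Icc (0:ℝ) T₀ → E)
    (F : (Set.Icc (0:ℝ) T₀ → E) → (Set.Icc (0:ℝ) T₀ → E'))
    (Finv : (Set.Icc (0:ℝ) T₀ → E') → (Set.Icc (0:ℝ) T₀ → E))
    (hFinv₁ : Function.LeftInverse Finv F)
    (hFmeas : Measurable F) (hFinvmeas : Measurable Finv)
    (hFcausal : ∀ (τ : Set.Icc (0:ℝ) T₀) (x x' : Set.Icc (0:ℝ) T₀ → E),
      (∀ s, s ≤ τ → x s = x' s) → ∀ s, s ≤ τ → F x s = F x' s)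
    (hFinvcausal : ∀ (τ : Set.Icc (0:ℝ) T₀) (x x' : Set.Icc (0:ℝ) T₀ → E'),
      (∀ s, s ≤ τ → x s = x' s) → ∀ s, s ≤ τ → Finv x s = Finv x' s)
    (y : Ω → Set.Icc (0:ℝ) T₀ → E') (hy : y = F ∘ y₀) :
    ∀ t : Set.Icc (0:ℝ) T₀,
      (⨆ s : Set.Icc (0:ℝ) T₀, ⨆ _ : s ≤ t,
          MeasurableSpace.comap (fun ω => y ω s) inferInstance) =
        ⨆ s : Set.Icc (0:ℝ) T₀, ⨆ _ : s ≤ t,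
          MeasurableSpace.comap (fun ω => y₀ ω s) inferInstance := by
  subst hy
  intro t
  refine le_antisymm (PathSpace.IsCausal.pastSigma_comp_le hFcausal hFmeas y₀ t) ?_
  have h := PathSpace.IsCausal.pastSigma_comp_le hFinvcausal hFinvmeas (F ∘ y₀) t
  rwa [← Function.comp_assoc, hFinv₁.comp_eq_id, Function.id_comp] at h

/-- if `y = F ∘ y₀` where `F` is a measurable causal bijection between path
spaces with measurable causal inverse, then the natural filtrations of `y` and `y₀` coincide:
`σ{y(s), s ≤ t} = σ{y₀(s), s ≤ t}` for all `t ∈ [0,T₀]`. -/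
theorem stmt_6 {Ω E E' : Type*} [MeasurableSpace Ω] [MeasurableSpace E] [MeasurableSpace E']
    (T₀ : ℝ) (hT₀ : 0 < T₀)
    (y₀ : Ω → Set.Icc (0:ℝ) T₀ → E) (hy₀ : Measurable y₀)
    (F : (Set.Icc (0:ℝ) T₀ → E) → (Set.Icc (0:ℝ) T₀ → E'))
    (hFbij : Function.Bijective F)
    (Finv : (Set.Icc (0:ℝ) T₀ → E') → (Set.Icc (0:ℝ) T₀ → E))
    (hFinv₁ : Function.LeftInverse Finv F)
    (hFinv₂ : Function.RightInverse Finv F)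
    (hFmeas : Measurable F) (hFinvmeas : Measurable Finv)
    (hFcausal : ∀ (τ : Set.Icc (0:ℝ) T₀) (x x' : Set.Icc (0:ℝ) T₀ → E),
      (∀ s, s ≤ τ → x s = x' s) → ∀ s, s ≤ τ → F x s = F x' s)
    (hFinvcausal : ∀ (τ : Set.Icc (0:ℝ) T₀) (x x' : Set.Icc (0:ℝ) T₀ → E'),
      (∀ s, s ≤ τ → x s = x' s) → ∀ s, s ≤ τ → Finv x s = Finv x' s)
    (y : Ω → Set.Icc (0:ℝ) T₀ → E') (hy : y = F ∘ y₀) :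
    ∀ t : Set.Icc (0:ℝ) T₀,
      (⨆ s : Set.Icc (0:ℝ) T₀, ⨆ _ : s ≤ t,
          MeasurableSpace.comap (fun ω => y ω s) inferInstance) =
        ⨆ s : Set.Icc (0:ℝ) T₀, ⨆ _ : s ≤ t,
          MeasurableSpace.comap (fun ω => y₀ ω s) inferInstance :=
  stmt_6_general T₀ y₀ F Finv hFinv₁ hFmeas hFinvmeas hFcausal hFinvcausal y hy
end

section
/- Let (Ω, ℱ, ℙ) be a probability space and T > 0. Let θ : Ω → ℝ be a random variable with ℙ(θ = 1) = ℙ(θ = −1) = 1/2 and let τ : Ω → ℝ be uniformly distributed on [0,T], with θ and τ independent. Define the process v : [0,T] × Ω → ℝ by v(t) = θ·1_{τ ≤ t}. Then v is a martingale on [0,T] with respect to its natural filtration 𝒱_t := σ{v(s) : s ∈ [0,t]}: each v(t) is integrable and 𝒱_t-measurable, and for all 0 ≤ t ≤ s ≤ T, E[v(s) | 𝒱_t] = v(t) almost surely. -/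
open MeasureTheory ProbabilityTheory

/-! The increment `v s - v t` is `θ` on `{t < τ ≤ s}` and vanishes on `{τ ≤ t}`, so it has mean
`E θ · ℙ(t < τ ≤ s) = 0` by independence. Every `v u` with `u ≤ t` is constant (zero) on
`{t < τ}`, so this event is an atom of `𝒱_t`: a set of `𝒱_t` either contains it, and then the
increment integrates over the set to its full mean `0`, or misses it, and then the increment
vanishes on the set. Hence `v s - v t` integrates to zero over every set of `𝒱_t`. -/

namespace MeasurableSpace

variable {Ω β : Type*}

@[reducible] def withAtom (S : Set Ω) : MeasurableSpace Ω where
  MeasurableSet' A := S ⊆ A ∨ Disjoint A S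
  measurableSet_empty := Or.inr (Set.empty_disjoint S)
  measurableSet_compl A := by
    rintro (hSA | hAS)
    · exact Or.inr (Set.disjoint_compl_left_iff_subset.2 hSA)
    · exact Or.inl hAS.symm.subset_compl_right
  measurableSet_iUnion f hf := by
    by_cases h : ∃ i, S ⊆ f i
    · obtain ⟨i, hi⟩ := h
      exact Or.inl (hi.trans (Set.subset_iUnion f i))
    · push Not at h
      exact Or.inr (Set.disjoint_iUnion_left.2 fun i => (hf i).resolve_left (h i))

theorem comap_le_withAtom [mβ : MeasurableSpace β] {S : Set Ω} {f : Ω → β}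
    (hf : ∀ x ∈ S, ∀ y ∈ S, f x = f y) : mβ.comap f ≤ withAtom S := by
  rintro _ ⟨B, -, rfl⟩
  by_cases h : ∃ x ∈ S, f x ∈ B
  · obtain ⟨x, hxS, hxB⟩ := h
    exact Or.inl fun y hyS => by rwa [Set.mem_preimage, hf y hyS x hxS]
  · exact Or.inr (Set.disjoint_left.2 fun y hyB hyS => h ⟨y, hyS, hyB⟩)

end MeasurableSpace

open MeasurableSpace

section Atom

variable {Ω : Type*} [MeasurableSpace Ω] {μ : Measure Ω} {S A : Set Ω} {g : Ω → ℝ}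

theorem setIntegral_eq_zero_of_measurableSet_withAtom (hg : ∀ ω ∉ S, g ω = 0)
    (hg_int : ∫ ω, g ω ∂μ = 0) (hA : MeasurableSet[withAtom S] A) : ∫ ω in A, g ω ∂μ = 0 := by
  rcases hA with hSA | hAS
  · rw [setIntegral_eq_integral_of_forall_compl_eq_zero fun ω hω => hg ω fun hωS => hω (hSA hωS),
      hg_int]
  · exact setIntegral_eq_zero_of_forall_eq_zero fun ω hωA => hg ω (Set.disjoint_left.1 hAS hωA)

end Atom

section Rademacher

theorem disjoint_setOf_eq_one_setOf_eq_neg_one {Ω : Type*} (θ : Ω → ℝ) :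
    Disjoint {ω | θ ω = 1} {ω | θ ω = -1} :=
  Set.disjoint_left.2 fun ω (h : θ ω = 1) (h' : θ ω = -1) => by norm_num [h] at h'

variable {Ω : Type*} [MeasurableSpace Ω] {μ : Measure Ω} [IsProbabilityMeasure μ] {θ : Ω → ℝ}

theorem ae_eq_one_or_eq_neg_one (hθ : Measurable θ) (h₁ : μ {ω | θ ω = 1} = 1 / 2)
    (hneg : μ {ω | θ ω = -1} = 1 / 2) : ∀ᵐ ω ∂μ, θ ω = 1 ∨ θ ω = -1 := by
  have h₁_meas : MeasurableSet {ω | θ ω = 1} := hθ (measurableSet_singleton 1)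
  have hneg_meas : MeasurableSet {ω | θ ω = -1} := hθ (measurableSet_singleton (-1))
  refine (mem_ae_iff_prob_eq_one (h₁_meas.union hneg_meas)).2 ?_
  rw [measure_union (disjoint_setOf_eq_one_setOf_eq_neg_one θ) hneg_meas, h₁, hneg,
    ENNReal.add_halves]

theorem integrable_of_ae_eq_one_or_eq_neg_one (hθ : Measurable θ)
    (h : ∀ᵐ ω ∂μ, θ ω = 1 ∨ θ ω = -1) : Integrable θ μ :=
  .of_bound hθ.aestronglyMeasurable 1 <| by
    filter_upwards [h] with ω hω
    rcases hω with h | h <;> simp [h]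

theorem integral_eq_zero_of_measure_eq_half (hθ : Measurable θ)
    (h₁ : μ {ω | θ ω = 1} = 1 / 2) (hneg : μ {ω | θ ω = -1} = 1 / 2) : ∫ ω, θ ω ∂μ = 0 := by
  have h₁_meas : MeasurableSet {ω | θ ω = 1} := hθ (measurableSet_singleton 1)
  have hneg_meas : MeasurableSet {ω | θ ω = -1} := hθ (measurableSet_singleton (-1))
  have hae : ∀ᵐ ω ∂μ, ω ∈ {ω | θ ω = 1} ∪ {ω | θ ω = -1} := ae_eq_one_or_eq_neg_one hθ h₁ hneg
  have hθ_int := integrable_of_ae_eq_one_or_eq_neg_one hθ hae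
  rw [← Measure.restrict_eq_self_of_ae_mem hae,
    setIntegral_union (disjoint_setOf_eq_one_setOf_eq_neg_one θ) hneg_meas hθ_int.integrableOn
      hθ_int.integrableOn,
    setIntegral_congr_fun h₁_meas fun ω (h : θ ω = 1) => h,
    setIntegral_congr_fun hneg_meas fun ω (h : θ ω = -1) => h,
    setIntegral_const, setIntegral_const, measureReal_def, measureReal_def, h₁, hneg]
  norm_num

end Rademacher

section StepProcess

variable {Ω : Type*} {θ τ : Ω → ℝ} {s t : ℝ}

noncomputable def stepProcess (θ τ : Ω → ℝ) (t : ℝ) (ω : Ω) : ℝ := if τ ω ≤ t then θ ω else 0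

@[reducible] def naturalSigmaAlgebra (X : ℝ → Ω → ℝ) (t : ℝ) : MeasurableSpace Ω :=
  ⨆ s ∈ Set.Icc (0 : ℝ) t, MeasurableSpace.comap (X s) inferInstance

theorem measurable_naturalSigmaAlgebra {X : ℝ → Ω → ℝ} (ht : 0 ≤ t) :
    Measurable[naturalSigmaAlgebra X t] (X t) :=
  measurable_iff_comap_le.2 <|
    le_iSup₂ (f := fun s (_ : s ∈ Set.Icc 0 t) => MeasurableSpace.comap (X s) inferInstance) t
      ⟨ht, le_rfl⟩

theorem stepProcess_eq_indicator : stepProcess θ τ t = {ω | τ ω ≤ t}.indicator θ := by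
  ext ω
  simp [stepProcess, Set.indicator_apply]

theorem stepProcess_eq_of_le (hts : t ≤ s) {ω : Ω} (hω : τ ω ≤ t) :
    stepProcess θ τ s ω = stepProcess θ τ t ω := by
  simp [stepProcess, hω, hω.trans hts]

theorem stepProcess_eq_zero_of_lt {ω : Ω} (hω : t < τ ω) : stepProcess θ τ t ω = 0 := by
  simp [stepProcess, hω.not_ge]

theorem naturalSigmaAlgebra_stepProcess_le_withAtom :
    naturalSigmaAlgebra (stepProcess θ τ) t ≤ withAtom {ω | t < τ ω} :=
  iSup₂_le fun u hu => comap_le_withAtom fun x hx y hy => by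
    rw [stepProcess_eq_zero_of_lt (hu.2.trans_lt hx), stepProcess_eq_zero_of_lt (hu.2.trans_lt hy)]

variable [MeasurableSpace Ω] {μ : Measure Ω}

theorem naturalSigmaAlgebra_le {X : ℝ → Ω → ℝ} (hX : ∀ s, Measurable (X s)) (t : ℝ) :
    naturalSigmaAlgebra X t ≤ ‹MeasurableSpace Ω› :=
  iSup₂_le fun s _ => (hX s).comap_le

theorem measurable_stepProcess (hθ : Measurable θ) (hτ : Measurable τ) (t : ℝ) :
    Measurable (stepProcess θ τ t) :=
  stepProcess_eq_indicator ▸ hθ.indicator (hτ measurableSet_Iic)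

theorem integrable_stepProcess (hθ : Integrable θ μ) (hτ : Measurable τ) (t : ℝ) :
    Integrable (stepProcess θ τ t) μ :=
  stepProcess_eq_indicator ▸ hθ.indicator (hτ measurableSet_Iic)

theorem integral_stepProcess [IsProbabilityMeasure μ] (hθ : AEStronglyMeasurable θ μ)
    (hθ_zero : ∫ ω, θ ω ∂μ = 0) (hτ : Measurable τ) (hind : IndepFun θ τ μ) (t : ℝ) :
    ∫ ω, stepProcess θ τ t ω ∂μ = 0 := by
  have h_ind : Measurable ((Set.Iic t).indicator (1 : ℝ → ℝ)) :=
    measurable_one.indicator measurableSet_Iic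
  have h_mul : stepProcess θ τ t = θ * ((Set.Iic t).indicator 1 ∘ τ) := by
    ext ω
    simp [stepProcess, Set.indicator_apply]
  have h_indep : IndepFun θ ((Set.Iic t).indicator 1 ∘ τ) μ := hind.comp measurable_id h_ind
  rw [h_mul, h_indep.integral_mul_eq_mul_integral hθ (h_ind.comp hτ).aestronglyMeasurable,
    hθ_zero, zero_mul]

theorem setIntegral_stepProcess_eq [IsProbabilityMeasure μ] (hθ : Integrable θ μ)
    (hθ_zero : ∫ ω, θ ω ∂μ = 0) (hτ : Measurable τ) (hind : IndepFun θ τ μ) (hts : t ≤ s)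
    {A : Set Ω} (hA : MeasurableSet[naturalSigmaAlgebra (stepProcess θ τ) t] A) :
    ∫ ω in A, stepProcess θ τ s ω ∂μ = ∫ ω in A, stepProcess θ τ t ω ∂μ := by
  have hs_int := integrable_stepProcess hθ hτ s
  have ht_int := integrable_stepProcess hθ hτ t
  have h_incr : ∫ ω in A, (stepProcess θ τ s ω - stepProcess θ τ t ω) ∂μ = 0 := by
    refine setIntegral_eq_zero_of_measurableSet_withAtom (S := {ω | t < τ ω}) (fun ω hω => ?_) ?_
      (naturalSigmaAlgebra_stepProcess_le_withAtom _ hA)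
    · rw [stepProcess_eq_of_le hts (not_lt.1 hω), sub_self]
    · rw [integral_sub hs_int ht_int, integral_stepProcess hθ.1 hθ_zero hτ hind,
        integral_stepProcess hθ.1 hθ_zero hτ hind, sub_zero]
  rwa [integral_sub hs_int.integrableOn ht_int.integrableOn, sub_eq_zero] at h_incr

theorem condExp_stepProcess [IsProbabilityMeasure μ] (hθ_meas : Measurable θ)
    (hθ : Integrable θ μ) (hθ_zero : ∫ ω, θ ω ∂μ = 0) (hτ : Measurable τ)
    (hind : IndepFun θ τ μ) (ht : 0 ≤ t) (hts : t ≤ s) :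
    μ[stepProcess θ τ s | naturalSigmaAlgebra (stepProcess θ τ) t] =ᵐ[μ] stepProcess θ τ t :=
  (ae_eq_condExp_of_forall_setIntegral_eq
    (naturalSigmaAlgebra_le (measurable_stepProcess hθ_meas hτ) t)
    (integrable_stepProcess hθ hτ s) (fun _ _ _ => (integrable_stepProcess hθ hτ t).integrableOn)
    (fun _ hA _ => (setIntegral_stepProcess_eq hθ hθ_zero hτ hind hts hA).symm)
    (measurable_naturalSigmaAlgebra ht).aestronglyMeasurable).symm

end StepProcess

theorem stmt_13_general {Ω : Type*} [MeasurableSpace Ω] (μ : Measure Ω) [IsProbabilityMeasure μ]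
    (T : ℝ)
    (θ : Ω → ℝ) (hθmeas : Measurable θ)
    (τ : Ω → ℝ) (hτmeas : Measurable τ)
    (hθ1 : μ {ω | θ ω = 1} = 1/2) (hθ2 : μ {ω | θ ω = -1} = 1/2)
    (hindep : IndepFun θ τ μ)
    (v : ℝ → Ω → ℝ) (hv : ∀ t ω, v t ω = if τ ω ≤ t then θ ω else 0)
    (V : ℝ → MeasurableSpace Ω)
    (hV : ∀ t, V t = ⨆ s ∈ Set.Icc (0:ℝ) t, MeasurableSpace.comap (v s) inferInstance) :
    (∀ t ∈ Set.Icc (0:ℝ) T, Integrable (v t) μ ∧ Measurable[V t] (v t)) ∧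
      ∀ t s, t ∈ Set.Icc (0:ℝ) T → s ∈ Set.Icc (0:ℝ) T → t ≤ s →
        μ[v s | V t] =ᵐ[μ] v t := by
  obtain rfl : v = stepProcess θ τ := funext fun t => funext (hv t)
  obtain rfl : V = naturalSigmaAlgebra (stepProcess θ τ) := funext hV
  have hθ_int := integrable_of_ae_eq_one_or_eq_neg_one hθmeas
    (ae_eq_one_or_eq_neg_one hθmeas hθ1 hθ2)
  have hθ_zero := integral_eq_zero_of_measure_eq_half hθmeas hθ1 hθ2
  exact ⟨fun t ht =>
      ⟨integrable_stepProcess hθ_int hτmeas t, measurable_naturalSigmaAlgebra ht.1⟩,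
    fun t s ht _ hts => condExp_stepProcess hθmeas hθ_int hθ_zero hτmeas hindep ht.1 hts⟩

/-- the step process `v(t) = θ·1_{τ ≤ t}`, with `θ = ±1` with probability
1/2 each, `τ` uniform on `[0,T]`, and `θ, τ` independent, is a martingale with respect to
its natural filtration `𝒱_t = σ{v(s) : s ∈ [0,t]}`: each `v(t)` is integrable and
`𝒱_t`-measurable, and `E[v(s) | 𝒱_t] = v(t)` a.s. for `0 ≤ t ≤ s ≤ T`. -/
theorem stmt_13 {Ω : Type*} [MeasurableSpace Ω] (μ : Measure Ω) [IsProbabilityMeasure μ]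
    (T : ℝ) (hT : 0 < T)
    (θ : Ω → ℝ) (hθmeas : Measurable θ)
    (τ : Ω → ℝ) (hτmeas : Measurable τ)
    (hθ1 : μ {ω | θ ω = 1} = 1/2) (hθ2 : μ {ω | θ ω = -1} = 1/2)
    (hτunif : μ.map τ = (ENNReal.ofReal T)⁻¹ • volume.restrict (Set.Icc 0 T))
    (hindep : IndepFun θ τ μ)
    (v : ℝ → Ω → ℝ) (hv : ∀ t ω, v t ω = if τ ω ≤ t then θ ω else 0)
    (V : ℝ → MeasurableSpace Ω)
    (hV : ∀ t, V t = ⨆ s ∈ Set.Icc (0:ℝ) t, MeasurableSpace.comap (v s) inferInstance) :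
    (∀ t ∈ Set.Icc (0:ℝ) T, Integrable (v t) μ ∧ Measurable[V t] (v t)) ∧
      ∀ t s, t ∈ Set.Icc (0:ℝ) T → s ∈ Set.Icc (0:ℝ) T → t ≤ s →
        μ[v s | V t] =ᵐ[μ] v t :=
  stmt_13_general μ T θ hθmeas τ hτmeas hθ1 hθ2 hindep v hv V hV
end

section
/- Fix T > 0, ε > 0 and p, m ∈ ℕ. Let (Ω, ℱ) be a measurable space, let y₀ : Ω × [0,T] → ℝᵖ and u : Ω × [0,T] → ℝᵐ be jointly measurable processes such that s ↦ u(ω,s) is integrable on [0,T] for every ω, and let G : {(t,s) : 0 ≤ s ≤ t ≤ T} → (p×m real matrices) be continuous. Define y(ω,t) := y₀(ω,t) + ∫_0^t G(t,s) u(ω,s) ds, and let 𝒴_t := σ{ω ↦ y(ω,s) : s ∈ [0,t]} and 𝒴⁰_t := σ{ω ↦ y₀(ω,s) : s ∈ [0,t]}. Assume that u is progressively measurable with respect to the ε-delayed filtration of y, i.e. for every t ∈ [0,T] the restriction of u to Ω × [0,t] is measurable with respect to the product of 𝒴_{max(t−ε,0)} and the Borel σ-algebra on [0,t]. Then 𝒴_t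 = 𝒴⁰_t for all t ∈ [0,T]. -/
open MeasureTheory

/-- Auxiliary: measurability of the parametric integral `ω ↦ ∫₀ˢ G(s,τ) u(ω,τ) dτ`
with respect to any σ-algebra `m'` on `Ω` for which `u` restricted to `Ω × [0,s]`
is product-measurable. -/
lemma aux_int_meas {Ω : Type*} (m' : MeasurableSpace Ω) {p m : ℕ}
    (T s : ℝ) (hs0 : 0 ≤ s) (hsT : s ≤ T)
    (u : Ω → ℝ → Fin m → ℝ)
    (G : ℝ → ℝ → Matrix (Fin p) (Fin m) ℝ)
    (hG : ContinuousOn (fun q : ℝ × ℝ => G q.1 q.2)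
      {q : ℝ × ℝ | 0 ≤ q.2 ∧ q.2 ≤ q.1 ∧ q.1 ≤ T})
    (hu : @Measurable (Ω × Set.Icc (0:ℝ) s) (Fin m → ℝ)
        (m'.prod inferInstance) inferInstance (fun q => u q.1 q.2)) :
    @Measurable Ω (Fin p → ℝ) m' inferInstance
      (fun ω => ∫ τ in (0:ℝ)..s, (G s τ).mulVec (u ω τ)) := by
  letI : MeasurableSpace Ω := m'
  have hGc : Continuous fun τ : Set.Icc (0:ℝ) s => G s (τ : ℝ) := by
    apply hG.comp_continuous (continuous_const.prodMk continuous_subtype_val)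
    intro τ; exact ⟨τ.2.1, τ.2.2, hsT⟩
  have hF0 : Measurable (fun q : Ω × Set.Icc (0:ℝ) s =>
      (G s (q.2 : ℝ)).mulVec (u q.1 q.2)) := by
    apply measurable_pi_lambda
    intro i
    simp only [Matrix.mulVec, dotProduct]
    apply Finset.measurable_sum
    intro j _
    have h1 : Measurable fun q : Ω × Set.Icc (0:ℝ) s => G s (q.2 : ℝ) i j :=
      (((continuous_apply j).comp ((continuous_apply i).comp hGc)).measurable).comp
        measurable_snd
    have h2 : Measurable fun q : Ω × Set.Icc (0:ℝ) s => u q.1 q.2 j :=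
      (measurable_pi_apply j).comp hu
    exact h1.mul h2
  have hmap : Measurable (fun q : Ω × ℝ => ((q.1, Set.projIcc 0 s hs0 q.2) :
      Ω × Set.Icc (0:ℝ) s)) :=
    measurable_fst.prodMk (continuous_projIcc.measurable.comp measurable_snd)
  set F : Ω × ℝ → Fin p → ℝ := fun q =>
    (G s ((Set.projIcc 0 s hs0 q.2 : Set.Icc (0:ℝ) s) : ℝ)).mulVec
      (u q.1 (Set.projIcc 0 s hs0 q.2)) with hFdef
  have hF : Measurable F := hF0.comp hmap
  have hSM : StronglyMeasurable fun ω => ∫ τ, F (ω, τ) ∂(volume.restrict (Set.Ioc 0 s)) :=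
    hF.stronglyMeasurable.integral_prod_right'
  have heq : (fun ω => ∫ τ in (0:ℝ)..s, (G s τ).mulVec (u ω τ))
      = fun ω => ∫ τ, F (ω, τ) ∂(volume.restrict (Set.Ioc 0 s)) := by
    funext ω
    rw [intervalIntegral.integral_of_le hs0]
    apply setIntegral_congr_fun measurableSet_Ioc
    intro τ hτ
    have hmem : τ ∈ Set.Icc (0:ℝ) s := ⟨hτ.1.le, hτ.2⟩
    have : Set.projIcc 0 s hs0 τ = ⟨τ, hmem⟩ := Set.projIcc_of_mem hs0 hmem
    simp [hFdef, this]
  rw [heq]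
  exact hSM.measurable

/-- (Example 3 of the paper) if the control `u` is progressively measurable
with respect to the `ε`-delayed natural filtration of the output
`y(ω,t) = y₀(ω,t) + ∫₀ᵗ G(t,s) u(ω,s) ds`, then the natural filtrations of `y` and of the
uncontrolled output `y₀` coincide: `𝒴_t = 𝒴⁰_t` for all `t ∈ [0,T]`. -/
theorem stmt_14 {Ω : Type*} [MeasurableSpace Ω]
    (T : ℝ) (hT : 0 < T) (ε : ℝ) (hε : 0 < ε) (p m : ℕ)
    (y₀ : Ω → ℝ → Fin p → ℝ) (hy₀ : Measurable (Function.uncurry y₀))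
    (u : Ω → ℝ → Fin m → ℝ) (hu : Measurable (Function.uncurry u))
    (huint : ∀ ω, IntegrableOn (u ω) (Set.Icc 0 T))
    (G : ℝ → ℝ → Matrix (Fin p) (Fin m) ℝ)
    (hG : ContinuousOn (fun q : ℝ × ℝ => G q.1 q.2)
      {q : ℝ × ℝ | 0 ≤ q.2 ∧ q.2 ≤ q.1 ∧ q.1 ≤ T})
    (y : Ω → ℝ → Fin p → ℝ)
    (hy : ∀ ω t, y ω t = y₀ ω t + ∫ s in (0:ℝ)..t, (G t s).mulVec (u ω s))
    (Y Y0 : ℝ → MeasurableSpace Ω)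
    (hY : ∀ t, Y t = ⨆ s ∈ Set.Icc (0:ℝ) t,
      MeasurableSpace.comap (fun ω => y ω s) inferInstance)
    (hY0 : ∀ t, Y0 t = ⨆ s ∈ Set.Icc (0:ℝ) t,
      MeasurableSpace.comap (fun ω => y₀ ω s) inferInstance)
    (hprog : ∀ t ∈ Set.Icc (0:ℝ) T,
      @Measurable (Ω × Set.Icc (0:ℝ) t) (Fin m → ℝ)
        ((Y (max (t - ε) 0)).prod inferInstance) inferInstance
        (fun q => u q.1 q.2)) :
    ∀ t ∈ Set.Icc (0:ℝ) T, Y t = Y0 t := by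
  -- monotonicity of the filtrations
  have hYmono : ∀ a b : ℝ, a ≤ b → Y a ≤ Y b := by
    intro a b hab
    rw [hY a, hY b]
    exact biSup_mono fun s hs => ⟨hs.1, hs.2.trans hab⟩
  have hY0mono : ∀ a b : ℝ, a ≤ b → Y0 a ≤ Y0 b := by
    intro a b hab
    rw [hY0 a, hY0 b]
    exact biSup_mono fun s hs => ⟨hs.1, hs.2.trans hab⟩
  have key : ∀ n : ℕ, ∀ t ∈ Set.Icc (0:ℝ) T, t ≤ n * ε → Y t = Y0 t := by
    intro n
    induction n with
    | zero =>
      intro t ht h0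
      have ht0 : t = 0 := le_antisymm (by simpa using h0) ht.1
      subst ht0
      have hfun : (fun ω => y ω 0) = fun ω => y₀ ω 0 := by
        funext ω
        rw [hy, intervalIntegral.integral_same, add_zero]
      rw [hY, hY0]
      simp only [Set.Icc_self, Set.mem_singleton_iff, iSup_iSup_eq_left]
      rw [hfun]
    | succ n ih =>
      intro t ht htn
      -- auxiliary: for `s ∈ [0,t]`, the integral term is measurable for `Y (max (s-ε) 0)`
      have hsT : ∀ s ∈ Set.Icc (0:ℝ) t, s ∈ Set.Icc (0:ℝ) T := fun s hs =>
        ⟨hs.1, hs.2.trans ht.2⟩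
      apply le_antisymm
      · rw [hY t]
        apply iSup₂_le
        intro s hs
        have hsmem := hsT s hs
        -- the delayed time
        set t' : ℝ := max (s - ε) 0 with ht'def
        have ht'mem : t' ∈ Set.Icc (0:ℝ) T :=
          ⟨le_max_right _ _, max_le (by linarith [hsmem.2]) hT.le⟩
        have ht'n : t' ≤ n * ε := by
          apply max_le
          · have : t ≤ (n + 1) * ε := by push_cast at htn ⊢; linarith [htn]
            linarith [hs.2]
          · positivity
        have hIH : Y t' = Y0 t' := ih t' ht'mem ht'n
        have hprog' := hprog s hsmem
        rw [hIH] at hprog'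
        have hInt : @Measurable Ω (Fin p → ℝ) (Y0 t') inferInstance
            (fun ω => ∫ τ in (0:ℝ)..s, (G s τ).mulVec (u ω τ)) :=
          aux_int_meas (Y0 t') T s hs.1 hsmem.2 u G hG hprog'
        have hInt' : @Measurable Ω (Fin p → ℝ) (Y0 t) inferInstance
            (fun ω => ∫ τ in (0:ℝ)..s, (G s τ).mulVec (u ω τ)) :=
          hInt.mono (hY0mono t' t (max_le (by linarith [hs.2, hε.le]) ht.1)) le_rfl
        have hy0s : @Measurable Ω (Fin p → ℝ) (Y0 t) inferInstance (fun ω => y₀ ω s) := by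
          rw [measurable_iff_comap_le, hY0 t]
          exact le_biSup
            (fun s => MeasurableSpace.comap (fun ω => y₀ ω s) inferInstance) hs
        rw [← measurable_iff_comap_le]
        have : (fun ω => y ω s)
            = fun ω => y₀ ω s + ∫ τ in (0:ℝ)..s, (G s τ).mulVec (u ω τ) :=
          funext fun ω => hy ω s
        rw [this]
        exact hy0s.add hInt'
      · rw [hY0 t]
        apply iSup₂_le
        intro s hs
        have hsmem := hsT s hs
        have hprog' := hprog s hsmem
        have hInt : @Measurable Ω (Fin p → ℝ) (Y (max (s - ε) 0)) inferInstance
            (fun ω => ∫ τ in (0:ℝ)..s, (G s τ).mulVec (u ω τ)) :=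
          aux_int_meas _ T s hs.1 hsmem.2 u G hG hprog'
        have hInt' : @Measurable Ω (Fin p → ℝ) (Y t) inferInstance
            (fun ω => ∫ τ in (0:ℝ)..s, (G s τ).mulVec (u ω τ)) :=
          hInt.mono (hYmono _ t (max_le (by linarith [hs.1, hs.2, hε.le]) ht.1)) le_rfl
        have hys : @Measurable Ω (Fin p → ℝ) (Y t) inferInstance (fun ω => y ω s) := by
          rw [measurable_iff_comap_le, hY t]
          exact le_biSup
            (fun s => MeasurableSpace.comap (fun ω => y ω s) inferInstance) hs
        rw [← measurable_iff_comap_le]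
        have : (fun ω => y₀ ω s)
            = fun ω => y ω s - ∫ τ in (0:ℝ)..s, (G s τ).mulVec (u ω τ) := by
          funext ω
          rw [hy ω s]
          abel
        rw [this]
        exact hys.sub hInt'
  intro t ht
  obtain ⟨n, hn⟩ := exists_nat_ge (T / ε)
  refine key n t ht ?_
  calc t ≤ T := ht.2
    _ ≤ n * ε := by rw [← div_le_iff₀ hε] at *; exact hn
end
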